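/- Let Λ ⊆ ℝ be a Delaunay set with finite local complexity, self-similar with factor θ > 1, enumerated as (λ_n)_{n∈ℤ}, let s ≥ 2, and let n ∈ E = { n : λ_{n+1} ∉ θΛ }. Let Ψ_n be the unique function in W̃ = { f ∈ V_0^{(s)}(Λ) : f vanishes on θΛ } with compact support contained in [λ_n, ∞), Ψ_n(λ_{n+1}) = 1, and minimal support (any f ∈ W̃ supported in supp Ψ_n is proportional to Ψ_n). Then the support of Ψ_n equals the interval [λ_n, λ_{n+N_n}], where N_n is the smallest integer N ≥ s satisfying N = s + #((λ_n, λ_{n+N}) ∩ θΛ); equivalently, N_n is the smallest N such that the open interval (λ_n, λ_{n+N}) contains exactly s − 1 points of Λ \ θΛ. -/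

import Mathlib

open MeasureTheory Set Filter

noncomputable section

def UniformlyDiscrete (Λ : Set ℝ) : Prop :=
  ∃ r > 0, ∀ x ∈ Λ, ∀ y ∈ Λ, x ≠ y → r ≤ |x - y|

def RelativelyDense (Λ : Set ℝ) : Prop :=
  ∃ R > 0, ∀ x : ℝ, ∃ y ∈ Λ, |x - y| ≤ R

def Delaunay (Λ : Set ℝ) : Prop := UniformlyDiscrete Λ ∧ RelativelyDense Λ

def FiniteLocalComplexity (Λ : Set ℝ) : Prop :=
  ∀ R > 0, {S : Set ℝ | ∃ l ∈ Λ, S = ((fun x => x - l) '' Λ) ∩ Set.Ioo (-R) R}.Finite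

/-- The space `V_0^{(s)}(Λ)` of splines of order `s` with nodes at the points `lam n`:
functions in `L²(ℝ)` of class `C^{s-2}` that restrict to a polynomial of degree `≤ s-1`
on each interval `[lam n, lam (n+1)]`. -/
def SplineSpace (lam : ℤ → ℝ) (s : ℕ) : Set (ℝ → ℝ) :=
  {f | MemLp f 2 volume ∧ ContDiff ℝ (s - 2 : ℕ) f ∧
    ∀ n : ℤ, ∃ p : Polynomial ℝ, p.degree ≤ (s - 1 : ℕ) ∧
      ∀ x ∈ Set.Icc (lam n) (lam (n + 1)), f x = p.eval x}

/-- The squared `L²` norm of a (square-integrable) function. -/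
def l2sq (f : ℝ → ℝ) : ℝ := ∫ x : ℝ, (f x) ^ 2

/-- `v` is a Riesz basis of the subspace `V` of `L²(ℝ)`: every `v i` lies in `V`,
there are frame constants `0 < A ≤ B` for all finite linear combinations,
and finite linear combinations of the `v i` are `L²`-dense in `V`. -/
def IsRieszBasisOf {ι : Type} (V : Set (ℝ → ℝ)) (v : ι → ℝ → ℝ) : Prop :=
  (∀ i, v i ∈ V) ∧
  (∃ A B : ℝ, 0 < A ∧ A ≤ B ∧
    ∀ (t : Finset ι) (a : ι → ℝ),
      A * ∑ i ∈ t, (a i) ^ 2 ≤ l2sq (fun x => ∑ i ∈ t, a i * v i x) ∧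
      l2sq (fun x => ∑ i ∈ t, a i * v i x) ≤ B * ∑ i ∈ t, (a i) ^ 2) ∧
  (∀ f ∈ V, ∀ ε > 0, ∃ (t : Finset ι) (a : ι → ℝ),
      l2sq (fun x => f x - ∑ i ∈ t, a i * v i x) < ε)

/-- The space `W̃` of splines of order `s` on `Λ` vanishing at every point of `θΛ`. -/
def WtSpace (Λ : Set ℝ) (lam : ℤ → ℝ) (θ : ℝ) (s : ℕ) : Set (ℝ → ℝ) :=
  {f | f ∈ SplineSpace lam s ∧ ∀ y ∈ Λ, f (θ * y) = 0}

/-!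
The support of `Ψ` is an interval `[lam n, lam (n + N)]`: its endpoints are knots because a
polynomial piece vanishing on an open set vanishes identically, and it has no gaps because cutting
`Ψ` off inside a gap would give a function of `W̃` with smaller support that is not a multiple of
`Ψ`. Let `k` be the number of points of `θΛ` in `(lam n, lam (n + N))`.

* `N ≥ s + k`: `Ψ` is a `C^(s-2)` spline of degree `s - 1` whose zeros `lam n`, the points of
  `θΛ`, and `lam (n + N)` separate nonzero values. Differentiating `s - 2` times, Rolle's theorem
  produces a continuous piecewise linear function with `k + s - 1` such gaps, each of which must
  contain a knot.
* `N ≤ s + k`: otherwise linear algebra yields a nonzero combination of truncated powers lying in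
  `W̃`, supported in `supp Ψ` and vanishing at `lam (n + 1)`, contradicting minimality.
* `lam (n + N - 1) ∉ θΛ`: otherwise the last piece would vanish to order `s - 1` at `lam (n + N)`
  and also at `lam (n + N - 1)`, hence identically.

So `N = s + k`, and the number of points of `Λ \ θΛ` in `(lam n, lam (n + M))` first reaches
`s - 1` at `M = N`.
-/

open Polynomial Topology

def truncPow (a : ℝ) (d : ℕ) (x : ℝ) : ℝ := max (x - a) 0 ^ d

lemma truncPow_of_le {a x : ℝ} {d : ℕ} (hd : d ≠ 0) (h : x ≤ a) : truncPow a d x = 0 := by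
  simp [truncPow, max_eq_right (sub_nonpos.2 h), hd]

lemma truncPow_of_ge {a x : ℝ} (d : ℕ) (h : a ≤ x) : truncPow a d x = (x - a) ^ d := by
  simp [truncPow, max_eq_left (sub_nonneg.2 h)]

lemma hasDerivAt_max_zero_pow (q : ℕ) (x : ℝ) :
    HasDerivAt (fun x : ℝ => max x 0 ^ (q + 2)) ((q + 2) * max x 0 ^ (q + 1)) x := by
  rcases lt_trichotomy x 0 with hx | rfl | hx
  · have h : (fun x : ℝ => max x 0 ^ (q + 2)) =ᶠ[𝓝 x] fun _ => 0 := by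
      filter_upwards [Iio_mem_nhds hx] with y hy
      simp [max_eq_right (mem_Iio.1 hy).le]
    simpa [max_eq_right hx.le] using (hasDerivAt_const x (0 : ℝ)).congr_of_eventuallyEq h
  · have hleft : HasDerivWithinAt (fun x : ℝ => max x 0 ^ (q + 2)) 0 (Iic 0) 0 :=
      (hasDerivWithinAt_const 0 _ 0).congr (fun y hy => by simp [max_eq_right (mem_Iic.1 hy)])
        (by simp)
    have hright : HasDerivWithinAt (fun x : ℝ => max x 0 ^ (q + 2)) 0 (Ici 0) 0 := by
      simpa using ((hasDerivAt_pow (q + 2) (0 : ℝ)).hasDerivWithinAt (s := Ici 0)).congr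
        (fun y hy => by simp [max_eq_left (show (0 : ℝ) ≤ y from hy)]) (by simp)
    simpa [Iic_union_Ici] using hleft.union hright
  · have h : (fun x : ℝ => max x 0 ^ (q + 2)) =ᶠ[𝓝 x] fun y => y ^ (q + 2) := by
      filter_upwards [Ioi_mem_nhds hx] with y hy
      simp [max_eq_left (mem_Ioi.1 hy).le]
    simpa [max_eq_left hx.le] using (hasDerivAt_pow (q + 2) x).congr_of_eventuallyEq h

lemma contDiff_max_zero_pow (p : ℕ) : ContDiff ℝ p (fun x : ℝ => max x 0 ^ (p + 1)) := by
  induction p with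
  | zero => simpa using continuous_id.max continuous_const
  | succ q ih =>
    rw [Nat.cast_succ, contDiff_succ_iff_deriv]
    refine ⟨fun x => (hasDerivAt_max_zero_pow q x).differentiableAt, by simp, ?_⟩
    rw [funext fun x => (hasDerivAt_max_zero_pow q x).deriv]
    exact contDiff_const.mul ih

lemma contDiff_truncPow (a : ℝ) (p : ℕ) : ContDiff ℝ p (truncPow a (p + 1)) :=
  (contDiff_max_zero_pow p).comp (contDiff_id.sub contDiff_const)

lemma sum_truncPow_eqOn {ι : Type*} [Fintype ι] (a v : ι → ℝ) {d : ℕ} (hd : d ≠ 0) {u w : ℝ}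
    (ha : ∀ j, a j ≤ u ∨ w ≤ a j) :
    EqOn (fun x => ∑ j, v j * truncPow (a j) d x)
      (fun x => (∑ j ∈ Finset.univ.filter (a · ≤ u), C (v j) * (X - C (a j)) ^ d).eval x)
      (Icc u w) := by
  intro x hx
  simp only [eval_finsetSum, Finset.sum_filter]
  refine Finset.sum_congr rfl fun j _ => ?_
  split_ifs with h
  · simp [truncPow_of_ge d (h.trans hx.1)]
  · simp [truncPow_of_le hd (hx.2.trans ((ha j).resolve_left h))]

lemma natDegree_sum_C_mul_X_sub_C_pow_le {ι : Type*} (t : Finset ι) (a v : ι → ℝ) (d : ℕ) :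
    (∑ j ∈ t, C (v j) * (X - C (a j)) ^ d).natDegree ≤ d :=
  natDegree_sum_le_of_forall_le _ _ fun j _ =>
    (natDegree_C_mul_le _ _).trans (by rw [natDegree_pow, natDegree_X_sub_C, mul_one])

lemma Polynomial.iteratedDeriv_eval (p : ℝ[X]) (i : ℕ) :
    iteratedDeriv i (fun x => p.eval x) = fun x => (derivative^[i] p).eval x := by
  induction i generalizing p with
  | zero => simp
  | succ i ih =>
    have hderiv : _root_.deriv (fun x => p.eval x) = fun x => p.derivative.eval x := by
      ext x
      exact p.deriv
    rw [iteratedDeriv_succ', hderiv, ih, Function.iterate_succ_apply]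

lemma iteratedDeriv_eqOn_Icc {f : ℝ → ℝ} {p : ℝ[X]} {u v : ℝ} {i : ℕ}
    (hf : Continuous (iteratedDeriv i f)) (huv : u < v) (h : EqOn f (fun x => p.eval x) (Ioo u v)) :
    EqOn (iteratedDeriv i f) (fun x => (derivative^[i] p).eval x) (Icc u v) := by
  have h' := h.iteratedDeriv_of_isOpen isOpen_Ioo i
  rw [Polynomial.iteratedDeriv_eval] at h'
  rw [← closure_Ioo huv.ne]
  exact h'.closure hf (Polynomial.continuous _)

lemma Polynomial.eq_zero_of_iterate_derivative_eval_eq_zero {q : ℝ[X]} {d : ℕ} {u v : ℝ}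
    (hdeg : q.natDegree ≤ d + 1) (huv : u ≠ v) (hv : ∀ i ≤ d, (derivative^[i] q).eval v = 0)
    (hu : q.eval u = 0) : q = 0 := by
  by_contra hq
  have hmult : d < q.rootMultiplicity v :=
    lt_rootMultiplicity_of_isRoot_iterate_derivative_of_mem_nonZeroDivisors hq hv
      (mem_nonZeroDivisors_of_ne_zero (by positivity))
  have hdvd : (X - C v) ^ (d + 1) * (X - C u) ∣ q :=
    (isCoprime_X_sub_C_of_isUnit_sub (sub_ne_zero.2 huv.symm).isUnit).pow_left.mul_dvd
      ((pow_dvd_pow _ hmult).trans (pow_rootMultiplicity_dvd q v)) (dvd_iff_isRoot.2 hu)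
  have := natDegree_le_of_dvd hdvd hq
  rw [natDegree_mul (pow_ne_zero _ (X_sub_C_ne_zero v)) (X_sub_C_ne_zero u), natDegree_pow,
    natDegree_X_sub_C, natDegree_X_sub_C] at this
  omega

section Knots

variable {lam : ℤ → ℝ}

lemma exists_knot_interval (hmono : StrictMono lam) (hdense : RelativelyDense (range lam))
    (x : ℝ) : ∃ j, lam j ≤ x ∧ x < lam (j + 1) := by
  obtain ⟨R, -, hR⟩ := hdense
  obtain ⟨-, ⟨i, rfl⟩, hi⟩ := hR (x - R)
  obtain ⟨-, ⟨b, rfl⟩, hb⟩ := hR (x + R + 1)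
  have hbdd : ∀ j, lam j ≤ x → j ≤ b := fun j hj =>
    (hmono.lt_iff_lt.1 (by linarith [(abs_le.1 hb).2])).le
  obtain ⟨j, hj, hmax⟩ := Int.exists_greatest_of_bdd ⟨b, hbdd⟩ ⟨i, by linarith [(abs_le.1 hi).1]⟩
  exact ⟨j, hj, not_le.1 fun h => by linarith [hmax (j + 1) h]⟩

lemma Ioo_inter_range_eq_image (hmono : StrictMono lam) (a b : ℤ) :
    Ioo (lam a) (lam b) ∩ range lam = lam '' Ioo a b := by
  ext x
  constructor
  · rintro ⟨hx, i, rfl⟩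
    exact ⟨i, ⟨hmono.lt_iff_lt.1 hx.1, hmono.lt_iff_lt.1 hx.2⟩, rfl⟩
  · rintro ⟨i, hi, rfl⟩
    exact ⟨⟨hmono hi.1, hmono hi.2⟩, i, rfl⟩

lemma finite_Ioo_inter_range (hmono : StrictMono lam) (a b : ℤ) :
    (Ioo (lam a) (lam b) ∩ range lam).Finite := by
  rw [Ioo_inter_range_eq_image hmono]
  exact (finite_Ioo a b).image lam

lemma ncard_Ioo_inter_range (hmono : StrictMono lam) (a b : ℤ) :
    (Ioo (lam a) (lam b) ∩ range lam).ncard = (b - a - 1).toNat := by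
  rw [Ioo_inter_range_eq_image hmono, ncard_image_of_injective _ hmono.injective,
    ← Finset.coe_Ioo, ncard_coe_finset, Int.card_Ioo]

def IsPiecewisePoly (lam : ℤ → ℝ) (d : ℕ) (g : ℝ → ℝ) : Prop :=
  ∀ j, ∃ p : ℝ[X], p.natDegree ≤ d ∧ EqOn g (fun x => p.eval x) (Icc (lam j) (lam (j + 1)))

lemma mem_splineSpace_iff {s : ℕ} {f : ℝ → ℝ} :
    f ∈ SplineSpace lam s ↔
      MemLp f 2 volume ∧ ContDiff ℝ (s - 2 : ℕ) f ∧ IsPiecewisePoly lam (s - 1) f := by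
  simp only [SplineSpace, IsPiecewisePoly, mem_ofPred_eq, natDegree_le_iff_degree_le, EqOn]

lemma IsPiecewisePoly.eqOn_zero {d : ℕ} {g : ℝ → ℝ} (hg : IsPiecewisePoly lam d g) {j : ℤ}
    {x : ℝ} (hx : x ∈ Ico (lam j) (lam (j + 1))) (h : ∀ᶠ y in 𝓝[>] x, g y = 0) :
    EqOn g 0 (Icc (lam j) (lam (j + 1))) := by
  obtain ⟨p, -, hp⟩ := hg j
  obtain ⟨u, hu, hsub⟩ := mem_nhdsGT_iff_exists_Ioo_subset.1 h
  have hp0 : p = 0 := by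
    refine eq_zero_of_infinite_isRoot p
      ((Ioo_infinite (lt_min (mem_Ioi.1 hu) hx.2)).mono fun y hy => ?_)
    have hy' : y ∈ Icc (lam j) (lam (j + 1)) :=
      ⟨hx.1.trans hy.1.le, hy.2.le.trans (min_le_right _ _)⟩
    simpa [IsRoot, ← hp hy'] using hsub ⟨hy.1, hy.2.trans_le (min_le_left _ _)⟩
  intro y hy
  simpa [hp0] using hp hy

end Knots

lemma eq_zero_of_notMem_Ioo {f : ℝ → ℝ} (hf : Continuous f) {a b : ℝ}
    (h : ∀ x ∉ Icc a b, f x = 0) : ∀ x ∉ Ioo a b, f x = 0 := by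
  have hcl : closure (Icc a b)ᶜ ⊆ {x | f x = 0} :=
    closure_minimal (fun x hx => h x hx) (isClosed_eq hf continuous_const)
  rw [closure_compl, interior_Icc] at hcl
  exact fun x hx => hcl hx

lemma deriv_eq_zero_of_notMem_Ioo {g : ℝ → ℝ} (hg : Continuous (deriv g)) {a b : ℝ}
    (h : ∀ x ∉ Ioo a b, g x = 0) : ∀ x ∉ Ioo a b, deriv g x = 0 := by
  refine eq_zero_of_notMem_Ioo hg fun x hx => ?_
  have hx0 : g =ᶠ[𝓝 x] 0 := by
    filter_upwards [isClosed_Icc.isOpen_compl.mem_nhds hx] with y hy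
    exact h y fun hy' => hy (Ioo_subset_Icc_self hy')
  simp [hx0.deriv_eq]

lemma exists_deriv_ne_zero {g : ℝ → ℝ} (hg : Differentiable ℝ g) {a b : ℝ} (hab : a < b)
    (hne : g a ≠ g b) : ∃ ξ ∈ Ioo a b, deriv g ξ ≠ 0 := by
  obtain ⟨ξ, hξ, h⟩ := exists_deriv_eq_slope g hab hg.continuous.continuousOn
    hg.differentiableOn
  exact ⟨ξ, hξ, h ▸ div_ne_zero (sub_ne_zero.2 hne.symm) (sub_ne_zero.2 hab.ne')⟩

lemma exists_deriv_eq_zero_and_ne_zero {g : ℝ → ℝ} (hg : Differentiable ℝ g) {u v w : ℝ}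
    (hu : g u = 0) (hv : g v = 0) (hw : w ∈ Ioo u v) (hgw : g w ≠ 0) :
    ∃ z ∈ Ioo u v, deriv g z = 0 ∧ g z ≠ 0 := by
  obtain ⟨z, hz, hmax⟩ := isCompact_Icc.exists_isMaxOn (nonempty_Icc.2 (hw.1.trans hw.2).le)
    (hg.continuous.pow 2).continuousOn
  have hgz : g z ≠ 0 := fun h0 => by
    have h1 : g w ^ 2 ≤ g z ^ 2 := hmax (Ioo_subset_Icc_self hw)
    exact hgw (by simpa [h0] using h1)
  have hz' : z ∈ Ioo u v :=
    ⟨hz.1.lt_of_ne (by rintro rfl; exact hgz hu), hz.2.lt_of_ne (by rintro rfl; exact hgz hv)⟩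
  have h0 := (hmax.isLocalMax (Icc_mem_nhds hz'.1 hz'.2)).hasDerivAt_eq_zero
    ((hg z).hasDerivAt.pow 2)
  exact ⟨z, hz', by simpa [hgz] using h0, hgz⟩

section Rolle

variable {lam : ℤ → ℝ}

lemma IsPiecewisePoly.deriv {d : ℕ} {g : ℝ → ℝ} (hg : IsPiecewisePoly lam (d + 1) g)
    (hmono : StrictMono lam) (hcont : Continuous (deriv g)) :
    IsPiecewisePoly lam d (deriv g) := by
  intro j
  obtain ⟨p, hp, hgp⟩ := hg j
  refine ⟨derivative p, (natDegree_derivative_le p).trans (by omega), ?_⟩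
  simpa using iteratedDeriv_eqOn_Icc (i := 1) (by rwa [iteratedDeriv_one])
    (hmono (lt_add_one j)) (hgp.mono Ioo_subset_Icc_self)

lemma IsPiecewisePoly.exists_knot_mem_Ioo {g : ℝ → ℝ} (hg : IsPiecewisePoly lam 1 g)
    (hpart : ∀ x, ∃ j, lam j ≤ x ∧ x < lam (j + 1)) {u v w : ℝ} (hu : g u = 0) (hv : g v = 0)
    (hw : w ∈ Ioo u v) (hgw : g w ≠ 0) : (Ioo u v ∩ range lam).Nonempty := by
  obtain ⟨j, hj, hju⟩ := hpart u
  by_cases hjv : lam (j + 1) < v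
  · exact ⟨lam (j + 1), ⟨hju, hjv⟩, j + 1, rfl⟩
  obtain ⟨p, hp, hgp⟩ := hg j
  have hsub : Icc u v ⊆ Icc (lam j) (lam (j + 1)) := Icc_subset_Icc hj (not_lt.1 hjv)
  have hp0 : p = 0 := by
    refine eq_zero_of_natDegree_lt_card_of_eval_eq_zero' p {u, v} ?_ ?_
    · simp only [Finset.mem_insert, Finset.mem_singleton, forall_eq_or_imp, forall_eq]
      exact ⟨(hgp (hsub (left_mem_Icc.2 (hw.1.trans hw.2).le))).symm.trans hu,
        (hgp (hsub (right_mem_Icc.2 (hw.1.trans hw.2).le))).symm.trans hv⟩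
    · rw [Finset.card_pair (hw.1.trans hw.2).ne]
      omega
  exact absurd (by simpa [hp0] using hgp (hsub (Ioo_subset_Icc_self hw))) hgw

/-- Only `c 0, …, c (K + 1)` matter; asking `c` to be strictly monotone on all of `ℕ` just avoids
bounded index ranges. -/
def IsZeroChain (g : ℝ → ℝ) (K : ℕ) (c : ℕ → ℝ) : Prop :=
  StrictMono c ∧ (∀ x ∉ Ioo (c 0) (c (K + 1)), g x = 0) ∧ (∀ i, 0 < i → i ≤ K → g (c i) = 0) ∧
    ∀ i ≤ K, ∃ w ∈ Ioo (c i) (c (i + 1)), g w ≠ 0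

namespace IsZeroChain

variable {g : ℝ → ℝ} {K : ℕ} {c : ℕ → ℝ}

lemma eq_zero (h : IsZeroChain g K c) : ∀ i ≤ K + 1, g (c i) = 0 := fun i hi => by
  rcases Nat.eq_zero_or_pos i with rfl | hi0
  · exact h.2.1 _ fun h => h.1.false
  rcases hi.lt_or_eq with hi | rfl
  · exact h.2.2.1 i hi0 (by omega)
  · exact h.2.1 _ fun h => h.2.false

lemma add_one_le_encard_knots (h : IsZeroChain g K c) (hg : IsPiecewisePoly lam 1 g)
    (hpart : ∀ x, ∃ j, lam j ≤ x ∧ x < lam (j + 1)) :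
    (K + 1 : ℕ∞) ≤ (Ioo (c 0) (c (K + 1)) ∩ range lam).encard := by
  have hknot : ∀ i ≤ K, ∃ x ∈ Ioo (c i) (c (i + 1)), x ∈ range lam := fun i hi => by
    obtain ⟨w, hw, hgw⟩ := h.2.2.2 i hi
    exact hg.exists_knot_mem_Ioo hpart (h.eq_zero i (by omega)) (h.eq_zero (i + 1) (by omega)) hw
      hgw
  choose! e he using hknot
  have hmem : ∀ i ∈ Finset.range (K + 1), e i ∈ Ioo (c i) (c (i + 1)) ∧ e i ∈ range lam :=
    fun i hi => he i (by simpa [Nat.lt_succ_iff] using hi)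
  have hmaps : MapsTo e (Finset.range (K + 1) : Set ℕ) (Ioo (c 0) (c (K + 1)) ∩ range lam) :=
    fun i hi => ⟨⟨(h.1.monotone (Nat.zero_le i)).trans_lt (hmem i hi).1.1,
      (hmem i hi).1.2.trans_le (h.1.monotone (by simpa using hi))⟩, (hmem i hi).2⟩
  have hinj : StrictMonoOn e (Finset.range (K + 1) : Set ℕ) := fun i hi j hj hij =>
    (hmem i hi).1.2.trans ((h.1.monotone hij).trans_lt (hmem j hj).1.1)
  calc ((K + 1 : ℕ) : ℕ∞) = ((Finset.range (K + 1) : Finset ℕ) : Set ℕ).encard := by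
        rw [encard_coe_eq_coe_finsetCard, Finset.card_range]
    _ ≤ _ := encard_le_encard_of_injOn hmaps hinj.injOn

/-- Points `z i` where `g` is extremal in the gaps (so `g' = 0 ≠ g` there), padded by the endpoints,
form a zero chain of `g'`: consecutive points enclose a change of value of `g`, so by the mean
value theorem `g'` is nonzero somewhere in between. -/
lemma exists_deriv_chain (h : IsZeroChain g K c) (hg : Differentiable ℝ g)
    (hcont : Continuous (deriv g)) :
    ∃ c', IsZeroChain (deriv g) (K + 1) c' ∧ c' 0 = c 0 ∧ c' (K + 2) = c (K + 1) := by
  have hcrit : ∀ i ≤ K, ∃ z ∈ Ioo (c i) (c (i + 1)), deriv g z = 0 ∧ g z ≠ 0 :=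
    fun i hi => by
      obtain ⟨w, hw, hgw⟩ := h.2.2.2 i hi
      exact exists_deriv_eq_zero_and_ne_zero hg (h.eq_zero i (by omega))
        (h.eq_zero (i + 1) (by omega)) hw hgw
  choose! z hz using hcrit
  set c' : ℕ → ℝ := fun i =>
    if i = 0 then c 0 else if i ≤ K + 1 then z (i - 1) else c (K + 1) + (i - (K + 2) : ℝ)
  have hc'0 : c' 0 = c 0 := by simp [c']
  have hc'z : ∀ i ≤ K, c' (i + 1) = z i := fun i hi => by simp [c', hi]
  have hc'end : c' (K + 2) = c (K + 1) := by simp [c']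
  have hc' : StrictMono c' := strictMono_nat_of_lt_succ fun i => by
    rcases Nat.lt_or_ge i (K + 1) with hi | hi
    · rcases i with _ | j
      · rw [hc'0, hc'z 0 (Nat.zero_le _)]
        exact (hz 0 (Nat.zero_le _)).1.1
      · rw [hc'z j (by omega), hc'z (j + 1) (by omega)]
        exact (hz j (by omega)).1.2.trans (hz (j + 1) (by omega)).1.1
    rcases hi.eq_or_lt with rfl | hi
    · rw [hc'z K le_rfl, hc'end]
      exact (hz K le_rfl).1.2
    · simp only [c', if_neg (show i ≠ 0 by omega), if_neg (show ¬ i ≤ K + 1 by omega),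
        if_neg (show i + 1 ≠ 0 by omega), if_neg (show ¬ i + 1 ≤ K + 1 by omega)]
      push_cast
      linarith
  refine ⟨c', ⟨hc', ?_, fun i hi0 hi => ?_, fun i hi => ?_⟩, hc'0, hc'end⟩
  · rw [hc'0, hc'end]
    exact deriv_eq_zero_of_notMem_Ioo hcont h.2.1
  · obtain ⟨j, rfl⟩ : ∃ j, i = j + 1 := ⟨i - 1, by omega⟩
    rw [hc'z j (by omega)]
    exact (hz j (by omega)).2.1
  rcases i with _ | j
  · obtain ⟨ξ, hξ, hξ0⟩ := exists_deriv_ne_zero hg (hz 0 (Nat.zero_le _)).1.1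
      (by rw [h.eq_zero 0 (Nat.zero_le _)]; exact (hz 0 (Nat.zero_le _)).2.2.symm)
    exact ⟨ξ, by rwa [hc'0, hc'z 0 (Nat.zero_le _)], hξ0⟩
  · obtain ⟨ξ, hξ, hξ0⟩ := exists_deriv_ne_zero hg (hz j (by omega)).1.2
      (by rw [h.eq_zero (j + 1) (by omega)]; exact (hz j (by omega)).2.2)
    refine ⟨ξ, ⟨by rw [hc'z j (by omega)]; exact hξ.1, hξ.2.trans_le ?_⟩, hξ0⟩
    rcases (show j + 1 ≤ K ∨ j = K by omega) with hj | rfl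
    · rw [hc'z (j + 1) hj]
      exact (hz (j + 1) hj).1.1.le
    · rw [hc'end]

end IsZeroChain

/-- Rolle's theorem for splines: each differentiation lengthens a zero chain by one, down to the
piecewise linear case. -/
theorem IsZeroChain.add_le_encard_knots (hmono : StrictMono lam)
    (hpart : ∀ x, ∃ j, lam j ≤ x ∧ x < lam (j + 1)) (σ : ℕ) {g : ℝ → ℝ} {K : ℕ} {c : ℕ → ℝ}
    (h : IsZeroChain g K c) (hsmooth : ContDiff ℝ σ g) (hg : IsPiecewisePoly lam (σ + 1) g) :
    (K + σ + 1 : ℕ∞) ≤ (Ioo (c 0) (c (K + 1)) ∩ range lam).encard := by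
  induction σ generalizing g K c with
  | zero => simpa using h.add_one_le_encard_knots hg hpart
  | succ σ ih =>
    have hcont : Continuous (deriv g) := hsmooth.continuous_deriv (by simp)
    obtain ⟨c', hc', hc'0, hc'end⟩ := h.exists_deriv_chain (hsmooth.differentiable (by simp)) hcont
    have := ih hc' (contDiff_succ_iff_deriv.1 hsmooth).2.2 (hg.deriv hmono hcont)
    rw [hc'0, hc'end] at this
    convert this using 2
    push_cast
    ring

end Rolle

section MinimalSupport

variable {Λ : Set ℝ} {lam : ℤ → ℝ} {θ : ℝ} {s : ℕ} {Ψ : ℝ → ℝ}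

lemma contDiff_indicator_Iic {n : WithTop ℕ∞} {f : ℝ → ℝ} (hf : ContDiff ℝ n f) {x : ℝ}
    (hx : f =ᶠ[𝓝 x] 0) : ContDiff ℝ n ((Iic x).indicator f) := by
  refine contDiff_iff_contDiffAt.2 fun y => ?_
  rcases lt_trichotomy y x with hy | rfl | hy
  · refine hf.contDiffAt.congr_of_eventuallyEq ?_
    filter_upwards [Iio_mem_nhds hy] with z hz
    exact indicator_of_mem (mem_Iic.2 (mem_Iio.1 hz).le) f
  · refine (contDiffAt_const (c := (0 : ℝ))).congr_of_eventuallyEq ?_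
    filter_upwards [hx] with z hz
    simp [indicator_apply, hz]
  · refine (contDiffAt_const (c := (0 : ℝ))).congr_of_eventuallyEq ?_
    filter_upwards [Ioi_mem_nhds hy] with z hz
    exact indicator_of_notMem (show z ∉ Iic x from not_le.2 (mem_Ioi.1 hz)) f

lemma indicator_Iic_mem_WtSpace (hΨ : Ψ ∈ WtSpace Λ lam θ s) {x : ℝ} (hx : x ∉ tsupport Ψ) :
    (Iic x).indicator Ψ ∈ WtSpace Λ lam θ s := by
  obtain ⟨hspline, hvan⟩ := hΨ
  obtain ⟨hL2, hsmooth, hpoly⟩ := mem_splineSpace_iff.1 hspline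
  rw [notMem_tsupport_iff_eventuallyEq] at hx
  refine ⟨mem_splineSpace_iff.2 ⟨hL2.indicator measurableSet_Iic,
    contDiff_indicator_Iic hsmooth hx, fun j => ?_⟩,
    fun y hy => by simp [indicator_apply, hvan y hy]⟩
  obtain ⟨p, hp, hΨp⟩ := hpoly j
  by_cases hj : lam (j + 1) ≤ x
  · exact ⟨p, hp, fun y hy => by rw [indicator_of_mem (mem_Iic.2 (hy.2.trans hj))]; exact hΨp hy⟩
  refine ⟨0, by simp, fun y hy => ?_⟩
  by_cases hjx : x < lam j
  · simp [indicator_of_notMem (show y ∉ Iic x from not_le.2 (hjx.trans_le hy.1))]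
  · have hpiece := hpoly.eqOn_zero ⟨not_lt.1 hjx, not_le.1 hj⟩ (nhdsWithin_le_nhds hx)
    simp [indicator_apply, hpiece hy]

lemma ordConnected_tsupport_of_minimal (hΨ : Ψ ∈ WtSpace Λ lam θ s)
    (hmin : ∀ f ∈ WtSpace Λ lam θ s, tsupport f ⊆ tsupport Ψ → ∃ c : ℝ, f = fun x => c * Ψ x) :
    (tsupport Ψ).OrdConnected := by
  refine ordConnected_of_Ioo fun a ha b hb _ x hx => ?_
  by_contra hxΨ
  obtain ⟨c, hc⟩ := hmin _ (indicator_Iic_mem_WtSpace hΨ hxΨ)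
    (closure_mono (by rw [support_indicator]; exact inter_subset_right))
  obtain ⟨y, hy, hΨy⟩ := mem_closure_iff.1 hb (Ioi x) isOpen_Ioi hx.2
  obtain ⟨y', hy', hΨy'⟩ := mem_closure_iff.1 ha (Iio x) isOpen_Iio hx.1
  have hc0 : c = 0 := by
    have := congrFun hc y
    rw [indicator_of_notMem (show y ∉ Iic x from not_le.2 (mem_Ioi.1 hy))] at this
    exact (mul_eq_zero.1 this.symm).resolve_right hΨy
  have := congrFun hc y'
  rw [indicator_of_mem (mem_Iic.2 (mem_Iio.1 hy').le), hc0, zero_mul] at this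
  exact hΨy' this

lemma IsPiecewisePoly.exists_knot_isGreatest_tsupport {d : ℕ} (hΨ : IsPiecewisePoly lam d Ψ)
    (hpart : ∀ x, ∃ j, lam j ≤ x ∧ x < lam (j + 1)) (hcs : HasCompactSupport Ψ)
    (hne : (tsupport Ψ).Nonempty) : ∃ m, IsGreatest (tsupport Ψ) (lam m) := by
  have hB := hcs.isCompact.sSup_mem hne
  have hle : ∀ x ∈ tsupport Ψ, x ≤ sSup (tsupport Ψ) := fun x hx =>
    le_csSup hcs.isCompact.bddAbove hx
  obtain ⟨m, hm, hmB⟩ := hpart (sSup (tsupport Ψ))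
  have hright : ∀ y, sSup (tsupport Ψ) < y → Ψ y = 0 := fun y hy =>
    image_eq_zero_of_notMem_tsupport fun h => (hle y h).not_gt hy
  have hpiece := hΨ.eqOn_zero ⟨hm, hmB⟩ (eventually_nhdsWithin_of_forall hright)
  have hsub : tsupport Ψ ⊆ Iic (lam m) := by
    refine closure_minimal (fun y hy => mem_Iic.2 (not_lt.1 fun hmy => hy ?_)) isClosed_Iic
    rcases le_or_gt y (lam (m + 1)) with h | h
    · exact hpiece ⟨hmy.le, h⟩
    · exact hright y (hmB.trans h)
  rw [le_antisymm (hsub hB) hm] at hB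
  exact ⟨m, hB, hsub⟩

lemma exists_tsupport_eq_Icc_of_minimal (hmono : StrictMono lam)
    (hpart : ∀ x, ∃ j, lam j ≤ x ∧ x < lam (j + 1)) (hΨ : Ψ ∈ WtSpace Λ lam θ s)
    (hcs : HasCompactSupport Ψ) {n : ℤ} (hsupp : tsupport Ψ ⊆ Ici (lam n))
    (hval : Ψ (lam (n + 1)) ≠ 0)
    (hmin : ∀ f ∈ WtSpace Λ lam θ s, tsupport f ⊆ tsupport Ψ → ∃ c : ℝ, f = fun x => c * Ψ x) :
    ∃ N : ℕ, 0 < N ∧ tsupport Ψ = Icc (lam n) (lam (n + N)) := by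
  obtain ⟨-, -, hpoly⟩ := mem_splineSpace_iff.1 hΨ.1
  have hn1 : lam (n + 1) ∈ tsupport Ψ := subset_tsupport _ hval
  have hleft : lam n ∈ tsupport Ψ := by
    by_contra h
    rw [notMem_tsupport_iff_eventuallyEq] at h
    exact hval (hpoly.eqOn_zero ⟨le_rfl, hmono (lt_add_one n)⟩ (nhdsWithin_le_nhds h)
      ⟨(hmono (lt_add_one n)).le, le_rfl⟩)
  obtain ⟨m, hm, hsub⟩ := hpoly.exists_knot_isGreatest_tsupport hpart hcs ⟨_, hn1⟩
  have hnm : n + 1 ≤ m := hmono.le_iff_le.1 (hsub hn1)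
  refine ⟨(m - n).toNat, by omega, ?_⟩
  rw [show n + ((m - n).toNat : ℤ) = m by omega]
  exact Subset.antisymm (fun x hx => ⟨hsupp hx, hsub hx⟩)
    ((ordConnected_tsupport_of_minimal hΨ hmin).out hleft hm)

end MinimalSupport

lemma exists_ne_zero_of_Ioo_subset_tsupport {f : ℝ → ℝ} {u v : ℝ} (huv : u < v)
    (h : Ioo u v ⊆ tsupport f) : ∃ w ∈ Ioo u v, f w ≠ 0 :=
  let ⟨_, hm⟩ := exists_between huv
  mem_closure_iff.1 (h hm) (Ioo u v) isOpen_Ioo hm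

lemma eq_zero_of_eqOn_of_vanishing_right {f : ℝ → ℝ} {q : ℝ[X]} {d : ℕ} {u v : ℝ}
    (hf : ContDiff ℝ d f) (hq : q.natDegree ≤ d + 1) (huv : u < v)
    (hfq : EqOn f (fun x => q.eval x) (Icc u v)) (hright : ∀ x, v ≤ x → f x = 0) (hu : f u = 0) :
    q = 0 := by
  refine eq_zero_of_iterate_derivative_eval_eq_zero hq huv.ne (fun i hi => ?_)
    ((hfq (left_mem_Icc.2 huv.le)).symm.trans hu)
  have hcont : Continuous (iteratedDeriv i f) :=
    hf.continuous_iteratedDeriv i (by exact_mod_cast hi)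
  have hl := iteratedDeriv_eqOn_Icc hcont huv (hfq.mono Ioo_subset_Icc_self)
    (right_mem_Icc.2 huv.le)
  have hr := iteratedDeriv_eqOn_Icc (p := 0) hcont (lt_add_one v)
    (fun x hx => by simpa using hright x hx.1.le) (left_mem_Icc.2 (lt_add_one v).le)
  simp only [iterate_derivative_zero, eval_zero] at hr
  exact hl.symm.trans hr

lemma exists_strictMono_enum_of_subset_Ioo (T : Finset ℝ) {a b : ℝ} (hab : a < b)
    (hT : ↑T ⊆ Ioo a b) :
    ∃ c : ℕ → ℝ, StrictMono c ∧ c 0 = a ∧ c (T.card + 1) = b ∧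
      ∀ i, 0 < i → i ≤ T.card → c i ∈ T := by
  set e := T.orderEmbOfFin rfl
  have he : ∀ i, e i ∈ Ioo a b := fun i => hT (T.orderEmbOfFin_mem rfl i)
  let c : ℕ → ℝ := fun
    | 0 => a
    | i + 1 => if h : i < T.card then e ⟨i, h⟩ else b + (i - T.card)
  refine ⟨c, strictMono_nat_of_lt_succ fun i => ?_, rfl, by simp [c], fun i hi0 hi => ?_⟩
  · rcases i with _ | i
    · simp only [c]
      split_ifs with h
      · exact (he _).1
      · simpa [show T.card = 0 by omega] using hab
    · simp only [c]
      split_ifs with h h'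
      · exact e.strictMono (Fin.mk_lt_mk.2 (lt_add_one i))
      · have : ((i + 1 : ℕ) : ℝ) = T.card := by norm_cast; omega
        linarith [(he ⟨i, h⟩).2]
      · omega
      · push_cast
        linarith
  · obtain ⟨j, rfl⟩ : ∃ j, i = j + 1 := ⟨i - 1, by omega⟩
    simp only [c, dif_pos (show j < T.card by omega)]
    exact T.orderEmbOfFin_mem rfl _

section SupportLength

variable {Λ : Set ℝ} {lam : ℤ → ℝ} {θ : ℝ} {s : ℕ} {Ψ : ℝ → ℝ}

lemma add_ncard_le_of_tsupport_eq_Icc (hmono : StrictMono lam)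
    (hpart : ∀ x, ∃ j, lam j ≤ x ∧ x < lam (j + 1))
    (hΘ : (fun x => θ * x) '' Λ ⊆ range lam) (hs : 2 ≤ s) (hΨ : Ψ ∈ WtSpace Λ lam θ s)
    {n : ℤ} {N : ℕ} (hN : 0 < N) (hsupport : tsupport Ψ = Icc (lam n) (lam (n + N))) :
    s + (Ioo (lam n) (lam (n + N)) ∩ (fun x => θ * x) '' Λ).ncard ≤ N := by
  obtain ⟨-, hsmooth, hpoly⟩ := mem_splineSpace_iff.1 hΨ.1
  have hfin := (finite_Ioo_inter_range hmono n (n + N)).subset (inter_subset_inter_right _ hΘ)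
  obtain ⟨c, hc, hc0, hcend, hcT⟩ := exists_strictMono_enum_of_subset_Ioo hfin.toFinset
    (hmono (show n < n + N by omega)) (by simp)
  have hout : ∀ x ∉ Ioo (c 0) (c (hfin.toFinset.card + 1)), Ψ x = 0 := by
    rw [hc0, hcend]
    exact eq_zero_of_notMem_Ioo hsmooth.continuous fun x hx =>
      image_eq_zero_of_notMem_tsupport (hsupport ▸ hx)
  have hzero : ∀ i, 0 < i → i ≤ hfin.toFinset.card → Ψ (c i) = 0 := fun i hi0 hi => by
    obtain ⟨-, y, hy, hyc⟩ := hfin.mem_toFinset.1 (hcT i hi0 hi)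
    exact hyc ▸ hΨ.2 y hy
  have hsep : ∀ i ≤ hfin.toFinset.card, ∃ w ∈ Ioo (c i) (c (i + 1)), Ψ w ≠ 0 := fun i hi =>
    exists_ne_zero_of_Ioo_subset_tsupport (hc (lt_add_one i)) <| hsupport ▸ fun x hx =>
      ⟨hc0 ▸ (hc.monotone (Nat.zero_le i)).trans hx.1.le,
        hcend ▸ hx.2.le.trans (hc.monotone (by omega))⟩
  have key := IsZeroChain.add_le_encard_knots hmono hpart (s - 2) ⟨hc, hout, hzero, hsep⟩ hsmooth
    (by rwa [show s - 2 + 1 = s - 1 by omega])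
  rw [hc0, hcend, ← (finite_Ioo_inter_range hmono _ _).cast_ncard_eq,
    ncard_Ioo_inter_range hmono] at key
  rw [ncard_eq_toFinset_card _ hfin]
  have := ENat.natCast_le_natCast.1 (by exact_mod_cast key)
  omega

lemma pred_knot_notMem_of_tsupport_eq_Icc (hmono : StrictMono lam) (hs : 2 ≤ s)
    (hΨ : Ψ ∈ WtSpace Λ lam θ s) {n : ℤ} {N : ℕ} (hN : 0 < N)
    (hsupport : tsupport Ψ = Icc (lam n) (lam (n + N))) :
    lam (n + N - 1) ∉ (fun x => θ * x) '' Λ := by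
  rintro ⟨y, hy, hθy⟩
  obtain ⟨-, hsmooth, hpoly⟩ := mem_splineSpace_iff.1 hΨ.1
  obtain ⟨q, hq, hΨq⟩ := hpoly (n + N - 1)
  rw [sub_add_cancel] at hΨq
  have hlt : lam (n + N - 1) < lam (n + N) := hmono (by omega)
  have hright : ∀ x, lam (n + N) ≤ x → Ψ x = 0 := fun x hx =>
    eq_zero_of_notMem_Ioo hsmooth.continuous
      (fun x hx => image_eq_zero_of_notMem_tsupport (hsupport ▸ hx)) x fun h => hx.not_gt h.2
  have hq0 := eq_zero_of_eqOn_of_vanishing_right hsmooth (by omega) hlt hΨq hright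
    (hθy ▸ hΨ.2 y hy)
  obtain ⟨w, hw, hΨw⟩ := exists_ne_zero_of_Ioo_subset_tsupport hlt <| hsupport ▸
    Ioo_subset_Icc_self.trans (Icc_subset_Icc (hmono.monotone (by omega)) le_rfl)
  exact hΨw (by simpa [hq0] using hΨq (Ioo_subset_Icc_self hw))

end SupportLength

lemma exists_ne_zero_forall_sum_mul_eq_zero {ι α : Type*} [Fintype ι] (X : Finset α)
    (φ : ι → α → ℝ) (h : X.card < Fintype.card ι) :
    ∃ v : ι → ℝ, v ≠ 0 ∧ ∀ x ∈ X, ∑ i, v i * φ i x = 0 := by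
  have hdep : ¬LinearIndependent ℝ fun i (x : X) => φ i x := fun hli => by
    have := hli.fintype_card_le_finrank
    simp only [Module.finrank_fintype_fun_eq_card, Fintype.card_coe] at this
    omega
  obtain ⟨v, hv, i, hi⟩ := Fintype.not_linearIndependent_iff.1 hdep
  exact ⟨v, fun h => hi (by simp [h]), fun x hx => by simpa using congrFun hv ⟨x, hx⟩⟩

/-- Right of all nodes the sum is a single polynomial of degree `≤ d`. -/
lemma sum_truncPow_eq_zero_of_le {ι κ : Type*} [Fintype ι] [Fintype κ] (a v : ι → ℝ) {d : ℕ}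
    (hd : d ≠ 0) {b : ℝ} (hab : ∀ j, a j ≤ b) {z : κ → ℝ} (hz : Function.Injective z)
    (hcard : d < Fintype.card κ) (hzb : ∀ i, b ≤ z i)
    (hz0 : ∀ i, ∑ j, v j * truncPow (a j) d (z i) = 0) {x : ℝ} (hx : b ≤ x) :
    ∑ j, v j * truncPow (a j) d x = 0 := by
  have heq : ∀ y, b ≤ y → ∑ j, v j * truncPow (a j) d y =
      (∑ j ∈ Finset.univ.filter (a · ≤ b), C (v j) * (X - C (a j)) ^ d).eval y := fun y hy =>
    sum_truncPow_eqOn a v hd (fun j => Or.inl (hab j)) ⟨hy, le_rfl⟩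
  have hP := eq_zero_of_natDegree_lt_card_of_eval_eq_zero _ hz (fun i => (heq _ (hzb i)) ▸ hz0 i)
    ((natDegree_sum_C_mul_X_sub_C_pow_le _ a v d).trans_lt hcard)
  rw [heq x hx, hP, eval_zero]

section TruncPowSpline

variable {Λ : Set ℝ} {lam : ℤ → ℝ} {θ : ℝ} {s : ℕ}

lemma sum_truncPow_mem_WtSpace (hmono : StrictMono lam) (hs : 2 ≤ s) {n : ℤ} {N : ℕ}
    (v : Fin (N + 1) → ℝ)
    (hright : ∀ x, lam (n + N) ≤ x → ∑ j, v j * truncPow (lam (n + j)) (s - 1) x = 0)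
    (hΘ : ∀ y ∈ Λ, θ * y ∈ Ioo (lam n) (lam (n + N)) →
      ∑ j, v j * truncPow (lam (n + j)) (s - 1) (θ * y) = 0) :
    (fun x => ∑ j, v j * truncPow (lam (n + j)) (s - 1) x) ∈ WtSpace Λ lam θ s ∧
      tsupport (fun x => ∑ j, v j * truncPow (lam (n + j)) (s - 1) x) ⊆
        Icc (lam n) (lam (n + N)) := by
  have hd : s - 1 ≠ 0 := by omega
  have hleft : ∀ x, x ≤ lam n → ∑ j, v j * truncPow (lam (n + j)) (s - 1) x = 0 := fun x hx =>
    Finset.sum_eq_zero fun j _ => by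
      rw [truncPow_of_le hd (hx.trans (hmono.monotone (by omega))), mul_zero]
  have hsupp : tsupport (fun x => ∑ j, v j * truncPow (lam (n + j)) (s - 1) x) ⊆
      Icc (lam n) (lam (n + N)) :=
    closure_minimal (fun x hx => ⟨not_lt.1 fun h => hx (hleft x h.le),
      not_lt.1 fun h => hx (hright x h.le)⟩) isClosed_Icc
  have hsmooth : ContDiff ℝ (s - 2 : ℕ) fun x => ∑ j, v j * truncPow (lam (n + j)) (s - 1) x :=
    ContDiff.sum fun j _ => contDiff_const.mul <| by
      simpa [show s - 2 + 1 = s - 1 by omega] using contDiff_truncPow (lam (n + j)) (s - 2)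
  refine ⟨⟨mem_splineSpace_iff.2 ⟨hsmooth.continuous.memLp_of_hasCompactSupport
    (isCompact_Icc.of_isClosed_subset (isClosed_tsupport _) hsupp), hsmooth, fun i =>
      ⟨_, natDegree_sum_C_mul_X_sub_C_pow_le _ _ _ _, sum_truncPow_eqOn _ v hd fun j => ?_⟩⟩,
    fun y hy => ?_⟩, hsupp⟩
  · rcases le_or_gt (n + j) i with h | h
    · exact Or.inl (hmono.monotone h)
    · exact Or.inr (hmono.monotone (by omega))
  · rcases le_or_gt (θ * y) (lam n) with h | h
    · exact hleft _ h
    rcases le_or_gt (lam (n + N)) (θ * y) with h' | h'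
    · exact hright _ h'
    · exact hΘ y hy ⟨h, h'⟩

lemma exists_sum_truncPow_ne_zero (hmono : StrictMono lam) {d : ℕ} (hd : d ≠ 0) {n : ℤ}
    {N : ℕ} {v : Fin (N + 1) → ℝ} (hv : v ≠ 0) :
    ∃ x, ∑ j, v j * truncPow (lam (n + j)) d x ≠ 0 := by
  obtain ⟨j₀, hj₀, hmin⟩ := wellFounded_lt.has_min {j | v j ≠ 0} (Function.ne_iff.1 hv)
  obtain ⟨x, hx1, hx2⟩ := exists_between (hmono (lt_add_one (n + j₀)))
  refine ⟨x, ?_⟩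
  rw [Finset.sum_eq_single j₀]
  · rw [truncPow_of_ge d hx1.le]
    exact mul_ne_zero hj₀ (pow_ne_zero _ (sub_ne_zero.2 hx1.ne'))
  · intro j _ hj
    rcases lt_or_gt_of_ne hj with h | h
    · rw [not_not.1 fun h' => hmin j h' h, zero_mul]
    · have h' : (j₀ : ℕ) < j := h
      rw [truncPow_of_le hd (hx2.le.trans (hmono.monotone (by omega))), mul_zero]
  · simp

end TruncPowSpline

section Counting

variable {Λ : Set ℝ} {lam : ℤ → ℝ} {θ : ℝ} {s : ℕ} {Ψ : ℝ → ℝ}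

/-- If `N > s + #((lam n, lam (n + N)) ∩ θΛ)`, the `N + 1` truncated powers
`(x - lam (n + j))₊^(s-1)` admit a nonzero combination vanishing at `lam (n + 1)`, at the points of
`θΛ` in between, and at `s` points right of `lam (n + N)`. It lies in `W̃`, is supported in
`supp Ψ`, and is not a multiple of `Ψ`. -/
lemma le_add_ncard_of_minimal (hmono : StrictMono lam)
    (hΘ : (fun x => θ * x) '' Λ ⊆ range lam) (hs : 2 ≤ s) {n : ℤ} (hval : Ψ (lam (n + 1)) ≠ 0)
    (hmin : ∀ f ∈ WtSpace Λ lam θ s, tsupport f ⊆ tsupport Ψ → ∃ c : ℝ, f = fun x => c * Ψ x)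
    {N : ℕ} (hsub : Icc (lam n) (lam (n + N)) ⊆ tsupport Ψ) :
    N ≤ s + (Ioo (lam n) (lam (n + N)) ∩ (fun x => θ * x) '' Λ).ncard := by
  by_contra! hN
  have hd : s - 1 ≠ 0 := by omega
  have hfin := (finite_Ioo_inter_range hmono n (n + N)).subset (inter_subset_inter_right _ hΘ)
  set z : Fin (s - 1 + 1) → ℝ := fun i => lam (n + N) + (i + 1)
  set X : Finset ℝ := insert (lam (n + 1)) (hfin.toFinset ∪ Finset.univ.image z)
  have hX : X.card < Fintype.card (Fin (N + 1)) := by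
    have h1 : X.card ≤ (hfin.toFinset ∪ Finset.univ.image z).card + 1 :=
      Finset.card_insert_le _ _
    have h2 := Finset.card_union_le hfin.toFinset (Finset.univ.image z)
    have h3 : (Finset.univ.image z).card ≤ s - 1 + 1 := Finset.card_image_le.trans (by simp)
    rw [← ncard_eq_toFinset_card _ hfin] at h2
    simp only [Fintype.card_fin]
    omega
  obtain ⟨v, hv, hvX⟩ := exists_ne_zero_forall_sum_mul_eq_zero X
    (fun j : Fin (N + 1) => truncPow (lam (n + j)) (s - 1)) hX
  have hright : ∀ x, lam (n + N) ≤ x → ∑ j, v j * truncPow (lam (n + j)) (s - 1) x = 0 :=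
    fun x hx => sum_truncPow_eq_zero_of_le _ v hd (fun j => hmono.monotone (by omega)) (z := z)
      (fun i i' h => by simpa [z, Fin.val_inj] using h) (by simp) (fun i => by simp [z]; positivity)
      (fun i => hvX _ (Finset.mem_insert_of_mem (Finset.mem_union_right _
        (Finset.mem_image_of_mem z (Finset.mem_univ i))))) hx
  obtain ⟨hW, hsupp⟩ := sum_truncPow_mem_WtSpace (Λ := Λ) (θ := θ) hmono hs v hright
    fun y hy h => hvX _ (Finset.mem_insert_of_mem (Finset.mem_union_left _
      (hfin.mem_toFinset.2 ⟨h, y, hy, rfl⟩)))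
  obtain ⟨c, hc⟩ := hmin _ hW (hsupp.trans hsub)
  have hc0 : c = 0 := (mul_eq_zero.1 ((congrFun hc (lam (n + 1))).symm.trans
    (hvX _ (Finset.mem_insert_self _ _)))).resolve_right hval
  obtain ⟨x, hx⟩ := exists_sum_truncPow_ne_zero hmono hd hv
  exact hx (by simpa [hc0] using congrFun hc x)

lemma ncard_Ioo_inter_add_ncard_Ioo_inter_diff (hmono : StrictMono lam) {Θ : Set ℝ}
    (hΘ : Θ ⊆ range lam) (n : ℤ) (M : ℕ) :
    (Ioo (lam n) (lam (n + M)) ∩ Θ).ncard + (Ioo (lam n) (lam (n + M)) ∩ (range lam \ Θ)).ncard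
      = M - 1 := by
  have h := ncard_inter_add_ncard_sdiff_eq_ncard (Ioo (lam n) (lam (n + M)) ∩ range lam) Θ
    (finite_Ioo_inter_range hmono _ _)
  rw [ncard_Ioo_inter_range hmono, inter_assoc, inter_eq_right.2 hΘ, inter_sdiff_assoc] at h
  rw [h]
  omega

lemma isLeast_of_eq_add_ncard (hmono : StrictMono lam) {Θ : Set ℝ} (hΘ : Θ ⊆ range lam)
    (hs : 2 ≤ s) {n : ℤ} {N : ℕ} (hN : N = s + (Ioo (lam n) (lam (n + N)) ∩ Θ).ncard)
    (hlast : lam (n + N - 1) ∉ Θ) :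
    IsLeast {M : ℕ | s ≤ M ∧ M = s + (Ioo (lam n) (lam (n + M)) ∩ Θ).ncard} N ∧
      IsLeast {M : ℕ | (Ioo (lam n) (lam (n + M)) ∩ (range lam \ Θ)).ncard = s - 1} N := by
  set F : ℕ → ℕ := fun M => (Ioo (lam n) (lam (n + M)) ∩ (range lam \ Θ)).ncard
  have hsum := ncard_Ioo_inter_add_ncard_Ioo_inter_diff hmono hΘ n
  have hiff : ∀ M : ℕ, (s ≤ M ∧ M = s + (Ioo (lam n) (lam (n + M)) ∩ Θ).ncard) ↔ F M = s - 1 :=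
    fun M => by have := hsum M; simp only [F]; omega
  have hfin : ∀ M : ℕ, (Ioo (lam n) (lam (n + M)) ∩ (range lam \ Θ)).Finite := fun M =>
    (finite_Ioo_inter_range hmono _ _).subset (inter_subset_inter_right _ sdiff_subset)
  have hF : Monotone F := fun M M' h => ncard_le_ncard
    (inter_subset_inter_left _ (Ioo_subset_Ioo_right (hmono.monotone (by omega)))) (hfin M')
  have hN2 : 2 ≤ N := by omega
  have hstep : F (N - 1) < F N := by
    refine ncard_lt_ncard ((ssubset_iff_of_subset (inter_subset_inter_left _
      (Ioo_subset_Ioo_right (hmono.monotone (by omega))))).2 ⟨lam (n + N - 1), ?_, ?_⟩) (hfin N)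
    · exact ⟨⟨hmono (by omega), hmono (by omega)⟩, ⟨_, rfl⟩, hlast⟩
    · exact fun h => h.1.2.ne (by congr 1; omega)
  have hFN : F N = s - 1 := (hiff N).1 ⟨by omega, hN⟩
  have hleast : IsLeast {M | F M = s - 1} N :=
    ⟨hFN, fun M hM => not_lt.1 fun h => (hF (Nat.le_pred_of_lt h)).not_gt (hM ▸ hFN ▸ hstep)⟩
  exact ⟨by simpa only [hiff] using hleast, hleast⟩

end Counting

theorem statement5_general (Λ : Set ℝ) (lam : ℤ → ℝ) (θ : ℝ) (s : ℕ) (n : ℤ) (Ψ : ℝ → ℝ)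
    (hΛ : Delaunay Λ)
    (hself : (fun x => θ * x) '' Λ ⊆ Λ)
    (hmono : StrictMono lam) (hrange : Set.range lam = Λ) (hs : 2 ≤ s)
    (hmem : Ψ ∈ WtSpace Λ lam θ s)
    (hcs : HasCompactSupport Ψ) (hsupp : tsupport Ψ ⊆ Set.Ici (lam n))
    (hval : Ψ (lam (n + 1)) = 1)
    (hmin : ∀ f ∈ WtSpace Λ lam θ s, tsupport f ⊆ tsupport Ψ →
      ∃ c : ℝ, f = fun x => c * Ψ x) :
    ∃ N : ℕ,
      tsupport Ψ = Set.Icc (lam n) (lam (n + (N : ℤ))) ∧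
      IsLeast {M : ℕ | s ≤ M ∧
        M = s + (Set.Ioo (lam n) (lam (n + (M : ℤ))) ∩ ((fun x => θ * x) '' Λ)).ncard} N ∧
      IsLeast {M : ℕ |
        (Set.Ioo (lam n) (lam (n + (M : ℤ))) ∩ (Λ \ (fun x => θ * x) '' Λ)).ncard = s - 1} N := by
  subst hrange
  have hval' : Ψ (lam (n + 1)) ≠ 0 := hval ▸ one_ne_zero
  have hpart := exists_knot_interval hmono hΛ.2
  obtain ⟨N, hN, hsupport⟩ :=
    exists_tsupport_eq_Icc_of_minimal hmono hpart hmem hcs hsupp hval' hmin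
  have hlower := add_ncard_le_of_tsupport_eq_Icc hmono hpart hself hs hmem hN hsupport
  have hupper := le_add_ncard_of_minimal hmono hself hs hval' hmin hsupport.symm.subset
  exact ⟨N, hsupport, isLeast_of_eq_add_ncard hmono hself hs (by omega)
    (pred_knot_notMem_of_tsupport_eq_Icc hmono hs hmem hN hsupport)⟩

/-- the support of the minimally supported function `Ψ_n ∈ W̃` is
`[lam n, lam (n + N_n)]`, where `N_n` is the smallest `N ≥ s` with
`N = s + #((lam n, lam (n+N)) ∩ θΛ)`; equivalently the smallest `N` such that
`(lam n, lam (n+N))` contains exactly `s - 1` points of `Λ \ θΛ`. -/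
theorem statement5 (Λ : Set ℝ) (lam : ℤ → ℝ) (θ : ℝ) (s : ℕ) (n : ℤ) (Ψ : ℝ → ℝ)
    (hΛ : Delaunay Λ) (hflc : FiniteLocalComplexity Λ)
    (hθ : 1 < θ) (hself : (fun x => θ * x) '' Λ ⊆ Λ)
    (hmono : StrictMono lam) (hrange : Set.range lam = Λ) (hs : 2 ≤ s)
    (hE : lam (n + 1) ∉ (fun x => θ * x) '' Λ)
    (hmem : Ψ ∈ WtSpace Λ lam θ s)
    (hcs : HasCompactSupport Ψ) (hsupp : tsupport Ψ ⊆ Set.Ici (lam n))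
    (hval : Ψ (lam (n + 1)) = 1)
    (hmin : ∀ f ∈ WtSpace Λ lam θ s, tsupport f ⊆ tsupport Ψ →
      ∃ c : ℝ, f = fun x => c * Ψ x) :
    ∃ N : ℕ,
      tsupport Ψ = Set.Icc (lam n) (lam (n + (N : ℤ))) ∧
      IsLeast {M : ℕ | s ≤ M ∧
        M = s + (Set.Ioo (lam n) (lam (n + (M : ℤ))) ∩ ((fun x => θ * x) '' Λ)).ncard} N ∧
      IsLeast {M : ℕ |
        (Set.Ioo (lam n) (lam (n + (M : ℤ))) ∩ (Λ \ (fun x => θ * x) '' Λ)).ncard = s - 1} N :=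
  statement5_general Λ lam θ s n Ψ hΛ hself hmono hrange hs hmem hcs hsupp hval hmin
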